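/- Let G be an (n−k)-regular bipartite false twin-free graph on 2n vertices with bipartition A ∪ B and γ_t(G) = γ_gr^t(G) = 6, let a_1 ≠ a_2 be vertices of A, and set B_2 = N(a_1)\N(a_2), B_1 = N(a_2)\N(a_1), B' = N(a_1) ∩ N(a_2), A' = {a ∈ A\{a_1,a_2} : N(a) ⊆ B_1 ∪ B_2 ∪ B'}, and A'' = A \ (A' ∪ {a_1, a_2}). Then n = k² − k + 1, |A'| = k − 2, and |A''| = (k − 1)². -/

import Mathlib

/-- `S` is a total dominating set of `G`: every vertex has a neighbor in `S`. -/
def IsTotalDomSet {V : Type*} (G : SimpleGraph V) (S : Set V) : Prop :=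
  ∀ v : V, ∃ u ∈ S, G.Adj v u

/-- `l` is a legal sequence of `G`: the vertices are distinct and every vertex
(except possibly the first) totally dominates a vertex not totally dominated
by the previous vertices. -/
def IsLegalSeq {V : Type*} (G : SimpleGraph V) (l : List V) : Prop :=
  l.Nodup ∧ ∀ i : Fin l.length, 0 < (i : ℕ) →
    ∃ w : V, G.Adj (l.get i) w ∧ ∀ j : Fin l.length, (j : ℕ) < (i : ℕ) → ¬ G.Adj (l.get j) w

/-- `l` is a total dominating sequence of `G`. -/
def IsTotalDomSeq {V : Type*} (G : SimpleGraph V) (l : List V) : Prop :=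
  IsLegalSeq G l ∧ IsTotalDomSet G {v | v ∈ l}

/-- The Grundy total domination number of `G`: the maximum length of a total
dominating sequence. -/
noncomputable def grundyTotalDomNum {V : Type*} (G : SimpleGraph V) : ℕ :=
  sSup {k : ℕ | ∃ l : List V, IsTotalDomSeq G l ∧ l.length = k}

/-- The total domination number of `G`: the minimum cardinality of a total
dominating set. -/
noncomputable def totalDomNum {V : Type*} (G : SimpleGraph V) : ℕ :=
  sInf {k : ℕ | ∃ S : Set V, IsTotalDomSet G S ∧ S.ncard = k}

/-- `A`, `B` is a bipartition of `G`. -/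
def IsBipartitionOf {V : Type*} (G : SimpleGraph V) (A B : Set V) : Prop :=
  (∀ v : V, (v ∈ A ∧ v ∉ B) ∨ (v ∈ B ∧ v ∉ A)) ∧
  ∀ ⦃u v : V⦄, G.Adj u v → (u ∈ A ∧ v ∈ B) ∨ (u ∈ B ∧ v ∈ A)

/-- `G` has no false twins: distinct vertices have distinct open neighborhoods. -/
def FalseTwinFree {V : Type*} (G : SimpleGraph V) : Prop :=
  ∀ u v : V, u ≠ v → G.neighborSet u ≠ G.neighborSet v

/-- `G` has no isolated vertices. -/
def NoIsolatedVerts {V : Type*} (G : SimpleGraph V) : Prop :=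
  ∀ v : V, ∃ u : V, G.Adj v u

/-!
Let `S_A ⊆ A` and `S_B ⊆ B` be minimum sets dominating the opposite side. A minimal dominating
set is legal in any order, and a legal sequence inside `A` followed by one inside `B` is again
legal, because the two halves dominate different sides. Since `S_A ∪ S_B` is a total dominating
set, `γ_t = γ_gr^t = 6` forces `|S_A| + |S_B| = 6`, and every legal sequence inside `A` (extended
until it dominates `B`, then followed by `S_B`) has at most `|S_A|` vertices. Each vertex misses
exactly `k` vertices of the other side, so any `k + 1` of them dominate it and `k ≥ 2`; together
with false twin-freeness this gives legal sequences of length three on both sides, hence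
`|S_A| = |S_B| = 3`.

So any two vertices of one side have a common non-neighbour, and for two vertices of `A` it is
unique, lest a legal sequence of length four appear inside `A`. The non-adjacency relation is thus
a projective plane of order `k - 1`: the `k` non-neighbours of the common non-neighbour `p` of
`a₁, a₂` split `B \ {p}` into blocks of size `k - 1`, so `n - 1 = k (k - 1)`, and `A'` consists of
the non-neighbours of `p` other than `a₁, a₂`.
-/

section

variable {V : Type*} {G : SimpleGraph V}

def Dominates (G : SimpleGraph V) (S T : Set V) : Prop :=
  ∀ v ∈ T, ∃ u ∈ S, G.Adj v u

theorem isLegalSeq_iff_take {l : List V} :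
    IsLegalSeq G l ↔ l.Nodup ∧ ∀ i (hi : i < l.length), 0 < i →
      ∃ w, G.Adj l[i] w ∧ ∀ u ∈ l.take i, ¬ G.Adj u w := by
  refine and_congr_right fun _ => ⟨fun h i hi hpos => ?_, fun h i hpos => ?_⟩
  · obtain ⟨w, hiw, hw⟩ := h ⟨i, hi⟩ hpos
    refine ⟨w, hiw, fun u hu => ?_⟩
    obtain ⟨j, hj, rfl⟩ := List.mem_take_iff_getElem.1 hu
    exact hw ⟨j, by omega⟩ (by simp only; omega)
  · obtain ⟨w, hiw, hw⟩ := h i i.2 hpos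
    exact ⟨w, hiw, fun j hj => hw _ (List.mem_take_iff_getElem.2 ⟨j, by omega, rfl⟩)⟩

theorem IsLegalSeq.concat {l : List V} {a : V} (hl : IsLegalSeq G l) (ha : a ∉ l)
    (hw : ∃ w, G.Adj a w ∧ ∀ u ∈ l, ¬ G.Adj u w) : IsLegalSeq G (l ++ [a]) := by
  rw [isLegalSeq_iff_take] at hl ⊢
  refine ⟨List.nodup_append.2 ⟨hl.1, List.nodup_singleton a, by grind⟩, fun i hi hpos => ?_⟩
  rw [List.length_append, List.length_singleton] at hi
  rw [List.take_append_of_le_length (by omega)]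
  rcases Nat.lt_or_ge i l.length with hil | hil
  · rw [List.getElem_append_left hil]
    exact hl.2 i hil hpos
  · rw [List.getElem_concat_length (by omega), List.take_of_length_le hil]
    exact hw

theorem IsLegalSeq.append {l₁ l₂ : List V} (h₁ : IsLegalSeq G l₁) (h₂ : IsLegalSeq G l₂)
    (hiso : NoIsolatedVerts G) (hsep : ∀ u ∈ l₁, ∀ v ∈ l₂, ∀ w, G.Adj v w → ¬ G.Adj u w) :
    IsLegalSeq G (l₁ ++ l₂) := by
  rw [isLegalSeq_iff_take] at h₁ h₂ ⊢
  refine ⟨List.nodup_append.2 ⟨h₁.1, h₂.1, fun u hu v hv huv => ?_⟩, fun i hi hpos => ?_⟩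
  · obtain ⟨w, hw⟩ := hiso v
    exact hsep u hu v hv w hw (huv ▸ hw)
  rw [List.length_append] at hi
  rcases Nat.lt_or_ge i l₁.length with hil | hil
  · rw [List.getElem_append_left hil, List.take_append_of_le_length hil.le]
    exact h₁.2 i hil hpos
  rw [List.getElem_append_right hil, List.take_append, List.take_of_length_le hil]
  have hmem : l₂[i - l₁.length] ∈ l₂ := List.getElem_mem _
  rcases Nat.eq_zero_or_pos (i - l₁.length) with h0 | h0
  · obtain ⟨w, hw⟩ := hiso l₂[i - l₁.length]
    refine ⟨w, hw, fun u hu => ?_⟩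
    rw [h0, List.take_zero, List.append_nil] at hu
    exact hsep u hu _ hmem w hw
  · obtain ⟨w, hw, hfresh⟩ := h₂.2 _ (by omega) h0
    refine ⟨w, hw, fun u hu => ?_⟩
    rcases List.mem_append.1 hu with hu | hu
    exacts [hsep u hu _ hmem w hw, hfresh u hu]

theorem isLegalSeq_of_forall_exists_private {l : List V} (hl : l.Nodup)
    (hpriv : ∀ a ∈ l, ∃ w, G.Adj a w ∧ ∀ u ∈ l, u ≠ a → ¬ G.Adj u w) : IsLegalSeq G l := by
  induction l using List.reverseRecOn with
  | nil => exact ⟨List.nodup_nil, fun i => absurd i.2 (by simp)⟩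
  | append_singleton l a ih =>
    have ha : a ∉ l := fun h => (List.nodup_append.1 hl).2.2 a h a (by simp) rfl
    refine (ih (List.nodup_append.1 hl).1 fun b hb => ?_).concat ha ?_
    · obtain ⟨w, hbw, hw⟩ := hpriv b (by simp [hb])
      exact ⟨w, hbw, fun u hu => hw u (by simp [hu])⟩
    · obtain ⟨w, haw, hw⟩ := hpriv a (by simp)
      exact ⟨w, haw, fun u hu => hw u (by simp [hu]) (by rintro rfl; exact ha hu)⟩

theorem isLegalSeq_singleton (a : V) : IsLegalSeq G [a] :=
  ⟨List.nodup_singleton a, fun i hi => absurd (show (i : ℕ) < 1 from i.2) (by omega)⟩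

theorem IsLegalSeq.concat_of_adj {l : List V} {x y : V} (hl : IsLegalSeq G l) (hyx : G.Adj y x)
    (hy : ∀ u ∈ l, ¬ G.Adj y u) : IsLegalSeq G (l ++ [x]) :=
  hl.concat (fun hx => hy x hx hyx) ⟨y, hyx.symm, fun u hu huy => hy u hu huy.symm⟩

theorem IsLegalSeq.exists_append_dominates [Fintype V] {X Y : Set V} (hXY : Dominates G X Y)
    {l : List V} (hl : IsLegalSeq G l) (hlX : ∀ x ∈ l, x ∈ X) :
    ∃ m, IsLegalSeq G (l ++ m) ∧ (∀ x ∈ l ++ m, x ∈ X) ∧ Dominates G {x | x ∈ l ++ m} Y := by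
  by_cases hdom : Dominates G {x | x ∈ l} Y
  · exact ⟨[], by simpa using ⟨hl, hlX, hdom⟩⟩
  obtain ⟨y, hy, hny⟩ : ∃ y ∈ Y, ∀ u ∈ l, ¬ G.Adj y u := by
    simpa [Dominates] using hdom
  obtain ⟨x, hx, hyx⟩ := hXY y hy
  have hl' := hl.concat_of_adj hyx hny
  have hlen : (l ++ [x]).length ≤ Fintype.card V := hl'.1.length_le_card
  obtain ⟨m, hm⟩ := hl'.exists_append_dominates hXY (by simpa [or_imp, forall_and] using ⟨hlX, hx⟩)
  exact ⟨x :: m, by simpa using hm⟩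
termination_by Fintype.card V - l.length
decreasing_by simp only [List.length_append, List.length_singleton] at hlen ⊢; omega

theorem Minimal.exists_isLegalSeq [Finite V] {S Y : Set V} (hS : Minimal (Dominates G · Y) S) :
    ∃ l, IsLegalSeq G l ∧ {x | x ∈ l} = S ∧ l.length = S.ncard := by
  have hfin := S.toFinite
  refine ⟨hfin.toFinset.toList, isLegalSeq_of_forall_exists_private (Finset.nodup_toList _)
    fun a ha => ?_, by ext; simp, by rw [Finset.length_toList, Set.ncard_eq_toFinset_card]⟩
  rw [Finset.mem_toList, Set.Finite.mem_toFinset] at ha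
  obtain ⟨y, hy, hny⟩ : ∃ y ∈ Y, ∀ u ∈ S \ {a}, ¬ G.Adj y u := by
    by_contra! h
    exact (Set.sdiff_singleton_ssubset.2 ha).not_ge (hS.2 h Set.sdiff_subset)
  obtain ⟨u, hu, hyu⟩ := hS.1 y hy
  obtain rfl : u = a := by_contra fun hua => hny u ⟨hu, hua⟩ hyu
  refine ⟨y, hyu.symm, fun v hv hva hvy => ?_⟩
  rw [Finset.mem_toList, Set.Finite.mem_toFinset] at hv
  exact hny v ⟨hv, hva⟩ hvy.symm

theorem Dominates.exists_minimal_ncard_le [Finite V] {X Y : Set V} (h : Dominates G X Y) :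
    ∃ S ⊆ X, Minimal (Dominates G · Y) S ∧
      ∀ T ⊆ X, Dominates G T Y → S.ncard ≤ T.ncard := by
  obtain ⟨S, ⟨hSX, hS⟩, hmin⟩ :=
    Set.exists_min_image {T | T ⊆ X ∧ Dominates G T Y} Set.ncard (Set.toFinite _) ⟨X, le_rfl, h⟩
  refine ⟨S, hSX, ⟨hS, fun T hT hTS => ?_⟩, fun T hTX hT => hmin T ⟨hTX, hT⟩⟩
  exact (Set.eq_of_subset_of_ncard_le hTS (hmin T ⟨hTS.trans hSX, hT⟩)).symm.le

theorem dominates_of_ncard_lt [Finite V] {S X Y : Set V} (hSX : S ⊆ X)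
    (h : ∀ y ∈ Y, (X \ G.neighborSet y).ncard < S.ncard) : Dominates G S Y := by
  intro y hy
  by_contra! hS
  have hsub : S ⊆ X \ G.neighborSet y := fun x hx => ⟨hSX hx, fun hyx => hS x hx hyx⟩
  exact (Set.ncard_le_ncard hsub).not_gt (h y hy)

theorem IsTotalDomSet.totalDomNum_le {S : Set V} (h : IsTotalDomSet G S) :
    totalDomNum G ≤ S.ncard :=
  Nat.sInf_le (m := S.ncard) ⟨S, h, rfl⟩

theorem IsTotalDomSeq.length_le_grundyTotalDomNum [Fintype V] {l : List V}
    (h : IsTotalDomSeq G l) : l.length ≤ grundyTotalDomNum G :=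
  le_csSup ⟨Fintype.card V, by rintro _ ⟨l', hl', rfl⟩; exact hl'.1.1.length_le_card⟩ ⟨l, h, rfl⟩

theorem NoIsolatedVerts.of_totalDomNum_ne_zero (h : totalDomNum G ≠ 0) : NoIsolatedVerts G := by
  intro v
  by_contra! hv
  refine h (Nat.sInf_eq_zero.2 (Or.inr (Set.eq_empty_of_forall_notMem ?_)))
  rintro _ ⟨S, hS, -⟩
  obtain ⟨u, -, hvu⟩ := hS v
  exact hv u hvu

theorem FalseTwinFree.exists_adj_not_adj [Finite V] (hftf : FalseTwinFree G) {d : ℕ}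
    (hreg : ∀ v, (G.neighborSet v).ncard = d) {u v : V} (huv : u ≠ v) :
    ∃ w, G.Adj v w ∧ ¬ G.Adj u w := by
  by_contra! h
  have hsub : G.neighborSet v ⊆ G.neighborSet u := h
  exact hftf u v huv (Set.eq_of_subset_of_ncard_le hsub (by rw [hreg, hreg])).symm

theorem FalseTwinFree.isLegalSeq_pair [Finite V] (hftf : FalseTwinFree G) {d : ℕ}
    (hreg : ∀ v, (G.neighborSet v).ncard = d) {u v : V} (huv : u ≠ v) : IsLegalSeq G [u, v] := by
  obtain ⟨w, hvw, huw⟩ := hftf.exists_adj_not_adj hreg huv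
  exact (isLegalSeq_singleton u).concat (by simpa using huv.symm) ⟨w, hvw, by simpa using huw⟩

theorem FalseTwinFree.exists_isLegalSeq_length_three [Finite V] (hftf : FalseTwinFree G)
    {d : ℕ} (hreg : ∀ v, (G.neighborSet v).ncard = d) {X Y : Set V} (hXY : Dominates G X Y)
    {y : V} (hy : y ∈ Y) (h : 1 < (X \ G.neighborSet y).ncard) :
    ∃ l, IsLegalSeq G l ∧ (∀ x ∈ l, x ∈ X) ∧ l.length = 3 := by
  obtain ⟨a, a', ⟨ha, hya⟩, ⟨ha', hya'⟩, hne⟩ := (Set.one_lt_ncard_iff (Set.toFinite _)).1 h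
  obtain ⟨x, hx, hyx⟩ := hXY y hy
  refine ⟨[a, a', x], (hftf.isLegalSeq_pair hreg hne).concat_of_adj hyx ?_, ?_, rfl⟩
  · simpa using ⟨hya, hya'⟩
  · simpa using ⟨ha, ha', hx⟩

theorem exists_not_adj_not_adj_of_forall_three_le {X Y : Set V}
    (h : ∀ S ⊆ X, Dominates G S Y → 3 ≤ S.ncard) {a a' : V} (ha : a ∈ X) (ha' : a' ∈ X) :
    ∃ b ∈ Y, ¬ G.Adj b a ∧ ¬ G.Adj b a' := by
  by_contra! hdom
  have := h {a, a'} (Set.insert_subset ha (Set.singleton_subset_iff.2 ha')) fun b hb => by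
    by_cases hba : G.Adj b a
    exacts [⟨a, by simp, hba⟩, ⟨a', by simp, hdom b hb hba⟩]
  have := (Set.ncard_insert_le a {a'}).trans_eq (by rw [Set.ncard_singleton])
  omega

/-- The non-neighbourhoods of the `a ∈ A \ N(p)`, minus `p`, partition `B \ {p}`. -/
theorem ncard_sub_one_eq_ncard_mul [Finite V] {A B : Set V} {k : ℕ} {p : V} (hp : p ∈ B)
    (hkA : ∀ a ∈ A, (B \ G.neighborSet a).ncard = k)
    (hcover : ∀ y ∈ B, ∃ a ∈ A, ¬ G.Adj a y ∧ ¬ G.Adj a p)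
    (hunique : ∀ a ∈ A, ∀ a' ∈ A, a ≠ a' → ∀ y ∈ B,
      ¬ G.Adj y a → ¬ G.Adj y a' → ¬ G.Adj p a → ¬ G.Adj p a' → y = p) :
    B.ncard - 1 = (A \ G.neighborSet p).ncard * (k - 1) := by
  classical
  have : Fintype V := Fintype.ofFinite V
  set T := A \ G.neighborSet p
  have hpart : (B \ {p}).toFinset =
      T.toFinset.biUnion fun a => ((B \ G.neighborSet a) \ {p}).toFinset := by
    ext y
    simp only [Set.mem_toFinset, Finset.mem_biUnion, Set.mem_sdiff, Set.mem_singleton_iff, T,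
      SimpleGraph.mem_neighborSet]
    constructor
    · rintro ⟨hy, hyp⟩
      obtain ⟨a, ha, hya, hpa⟩ := hcover y hy
      exact ⟨a, ⟨ha, fun h => hpa h.symm⟩, ⟨hy, hya⟩, hyp⟩
    · rintro ⟨a, -, ⟨hy, -⟩, hyp⟩
      exact ⟨hy, hyp⟩
  have hdisj : (T.toFinset : Set V).PairwiseDisjoint
      fun a => ((B \ G.neighborSet a) \ {p}).toFinset := by
    intro a ha a' ha' hne
    simp only [Set.coe_toFinset, T, Set.mem_sdiff, SimpleGraph.mem_neighborSet] at ha ha'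
    refine Finset.disjoint_left.2 fun y hy hy' => ?_
    simp only [Set.mem_toFinset, Set.mem_sdiff, Set.mem_singleton_iff,
      SimpleGraph.mem_neighborSet] at hy hy'
    exact hy.2 <| hunique a ha.1 a' ha'.1 hne y hy.1.1 (fun h => hy.1.2 h.symm)
      (fun h => hy'.1.2 h.symm) ha.2 ha'.2
  have hcard : ∀ a ∈ T.toFinset, ((B \ G.neighborSet a) \ {p}).toFinset.card = k - 1 := by
    intro a ha
    simp only [Set.mem_toFinset, T, Set.mem_sdiff, SimpleGraph.mem_neighborSet] at ha
    rw [← Set.ncard_eq_toFinset_card', Set.ncard_sdiff_singleton_of_mem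
      (show p ∈ B \ G.neighborSet a from ⟨hp, fun h => ha.2 h.symm⟩),
      hkA a ha.1]
  rw [← Set.ncard_sdiff_singleton_of_mem hp, Set.ncard_eq_toFinset_card', hpart,
    Finset.card_biUnion hdisj, Finset.sum_congr rfl hcard, Finset.sum_const, smul_eq_mul,
    Set.ncard_eq_toFinset_card']

namespace IsBipartitionOf

variable {A B : Set V} (hbip : IsBipartitionOf G A B)
include hbip

theorem symm : IsBipartitionOf G B A :=
  ⟨fun v => (hbip.1 v).symm, fun _ _ h => (hbip.2 h).symm⟩

theorem isBipartiteWith : G.IsBipartiteWith A B where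
  disjoint := Set.disjoint_left.2 fun v hA hB => by rcases hbip.1 v with h | h <;> tauto
  mem_of_adj := hbip.2

theorem mem_of_adj {a b : V} (ha : a ∈ A) (hab : G.Adj a b) : b ∈ B :=
  hbip.isBipartiteWith.mem_of_mem_adj ha hab

theorem not_adj {u v : V} (hu : u ∈ A) (hv : v ∈ A) : ¬ G.Adj u v := fun h =>
  hbip.isBipartiteWith.disjoint.notMem_of_mem_left hv (hbip.mem_of_adj hu h)

theorem dominates (hiso : NoIsolatedVerts G) : Dominates G A B := fun b hb =>
  let ⟨a, hba⟩ := hiso b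
  ⟨a, hbip.symm.mem_of_adj hb hba, hba⟩

theorem isTotalDomSet_union {SA SB : Set V} (hSA : Dominates G SA B) (hSB : Dominates G SB A) :
    IsTotalDomSet G (SA ∪ SB) := fun v => by
  rcases hbip.1 v with ⟨hv, -⟩ | ⟨hv, -⟩
  · obtain ⟨u, hu, hvu⟩ := hSB v hv
    exact ⟨u, Or.inr hu, hvu⟩
  · obtain ⟨u, hu, hvu⟩ := hSA v hv
    exact ⟨u, Or.inl hu, hvu⟩

theorem ncard_add_ncard [Finite V] : A.ncard + B.ncard = Nat.card V := by
  have hAB : A ∪ B = Set.univ :=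
    Set.eq_univ_of_forall fun v => by rcases hbip.1 v with h | h <;> simp [h.1]
  rw [← Set.ncard_union_eq hbip.isBipartiteWith.disjoint, hAB, Set.ncard_univ]

theorem ncard_eq_ncard_of_regular [Fintype V] {d : ℕ}
    (hreg : ∀ v, (G.neighborSet v).ncard = d) (hd : d ≠ 0) : A.ncard = B.ncard := by
  classical
  have hdeg : ∀ v, G.degree v = d := fun v => by
    rw [← hreg v, ← SimpleGraph.card_neighborFinset_eq_degree, Set.ncard_eq_toFinset_card',
      SimpleGraph.neighborFinset_def]
  have := SimpleGraph.isBipartiteWith_sum_degrees_eq (s := A.toFinset) (t := B.toFinset)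
    (by simpa using hbip.isBipartiteWith)
  simp only [hdeg, Finset.sum_const, smul_eq_mul] at this
  rw [Set.ncard_eq_toFinset_card', Set.ncard_eq_toFinset_card']
  exact Nat.eq_of_mul_eq_mul_right (Nat.pos_of_ne_zero hd) this

theorem ncard_sdiff_neighborSet [Finite V] {a : V} (ha : a ∈ A) :
    (B \ G.neighborSet a).ncard = B.ncard - (G.neighborSet a).ncard :=
  Set.ncard_sdiff fun _ => hbip.mem_of_adj ha

theorem lt_and_ncard_eq_and_ncard_sdiff_neighborSet_eq [Fintype V] [Nonempty V]
    (hiso : NoIsolatedVerts G) {n k : ℕ} (hcard : Fintype.card V = 2 * n) (hreg : ∀ v, (G.neighborSet v).ncard = n - k) :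
    k < n ∧ A.ncard = n ∧ ∀ a ∈ A, (B \ G.neighborSet a).ncard = k := by
  have hdeg : n - k ≠ 0 := fun h => by
    obtain ⟨v⟩ := ‹Nonempty V›
    obtain ⟨u, hvu⟩ := hiso v
    exact ((Set.ncard_eq_zero (Set.toFinite _)).1 (h ▸ hreg v)).subset hvu
  have hAB := hbip.ncard_eq_ncard_of_regular hreg hdeg
  have hsides := hbip.ncard_add_ncard
  rw [Nat.card_eq_fintype_card, hcard] at hsides
  refine ⟨by omega, by omega, fun a ha => ?_⟩
  rw [hbip.ncard_sdiff_neighborSet ha, hreg]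
  omega

theorem isLegalSeq_append (hiso : NoIsolatedVerts G) {l m : List V} (hl : IsLegalSeq G l)
    (hm : IsLegalSeq G m) (hlA : ∀ x ∈ l, x ∈ A) (hmB : ∀ x ∈ m, x ∈ B) :
    IsLegalSeq G (l ++ m) :=
  hl.append hm hiso fun _ hu _ hv _ hvw huw =>
    hbip.not_adj (hlA _ hu) (hbip.symm.mem_of_adj (hmB _ hv) hvw) huw

theorem length_add_length_le_grundyTotalDomNum [Fintype V] (hiso : NoIsolatedVerts G)
    {l m : List V} (hl : IsLegalSeq G l) (hm : IsLegalSeq G m) (hlA : ∀ x ∈ l, x ∈ A)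
    (hmB : ∀ x ∈ m, x ∈ B) (hlB : Dominates G {x | x ∈ l} B) (hmA : Dominates G {x | x ∈ m} A) :
    l.length + m.length ≤ grundyTotalDomNum G := by
  have hseq : IsTotalDomSeq G (l ++ m) := by
    refine ⟨hbip.isLegalSeq_append hiso hl hm hlA hmB, ?_⟩
    simpa [Set.ofPred_or] using hbip.isTotalDomSet_union hlB hmA
  simpa using hseq.length_le_grundyTotalDomNum

theorem length_le_ncard_of_grundyTotalDomNum_le [Fintype V] (hiso : NoIsolatedVerts G)
    (hγ : grundyTotalDomNum G ≤ totalDomNum G) {SA SB : Set V} (hSA : Dominates G SA B)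
    (hSB : SB ⊆ B) (hSBmin : Minimal (Dominates G · A) SB) {l : List V} (hl : IsLegalSeq G l)
    (hlA : ∀ x ∈ l, x ∈ A) : l.length ≤ SA.ncard := by
  obtain ⟨m, hm, hmA, hmB⟩ := hl.exists_append_dominates (hbip.dominates hiso) hlA
  obtain ⟨lB, hlB, hlBS, hlBlen⟩ := hSBmin.exists_isLegalSeq
  have hgrundy := hbip.length_add_length_le_grundyTotalDomNum hiso hm hlB hmA
    (fun x hx => hSB (hlBS ▸ hx)) hmB (hlBS ▸ hSBmin.1)
  have htotal := (hbip.isTotalDomSet_union hSA hSBmin.1).totalDomNum_le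
  have hunion := Set.ncard_union_le SA SB
  rw [List.length_append] at hgrundy
  omega

theorem ncard_add_ncard_le_grundyTotalDomNum [Fintype V] (hiso : NoIsolatedVerts G)
    {SA SB : Set V} (hSA : SA ⊆ A) (hSAmin : Minimal (Dominates G · B) SA) (hSB : SB ⊆ B)
    (hSBmin : Minimal (Dominates G · A) SB) : SA.ncard + SB.ncard ≤ grundyTotalDomNum G := by
  obtain ⟨lA, hlA, hlAS, hlAlen⟩ := hSAmin.exists_isLegalSeq
  obtain ⟨lB, hlB, hlBS, hlBlen⟩ := hSBmin.exists_isLegalSeq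
  rw [← hlAlen, ← hlBlen]
  exact hbip.length_add_length_le_grundyTotalDomNum hiso hlA hlB (fun x hx => hSA (hlAS ▸ hx))
    (fun x hx => hSB (hlBS ▸ hx)) (hlAS ▸ hSAmin.1) (hlBS ▸ hSBmin.1)

theorem three_le_and_length_le_three [Fintype V] (hiso : NoIsolatedVerts G)
    (hftf : FalseTwinFree G) {d k : ℕ} (hreg : ∀ v, (G.neighborSet v).ncard = d)
    (hkA : ∀ a ∈ A, (B \ G.neighborSet a).ncard = k)
    (hkB : ∀ b ∈ B, (A \ G.neighborSet b).ncard = k) (hA : k < A.ncard) (hB : k < B.ncard)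
    (ht : totalDomNum G = 6) (hg : grundyTotalDomNum G = 6) :
    (∀ S ⊆ A, Dominates G S B → 3 ≤ S.ncard) ∧
      ∀ l, IsLegalSeq G l → (∀ x ∈ l, x ∈ A) → l.length ≤ 3 := by
  obtain ⟨SA, hSAA, hSAmin, hSA⟩ := (hbip.dominates hiso).exists_minimal_ncard_le
  obtain ⟨SB, hSBB, hSBmin, hSB⟩ := (hbip.symm.dominates hiso).exists_minimal_ncard_le
  have hsum_le : SA.ncard + SB.ncard ≤ 6 :=
    hg ▸ hbip.ncard_add_ncard_le_grundyTotalDomNum hiso hSAA hSAmin hSBB hSBmin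
  have hsum_ge : 6 ≤ SA.ncard + SB.ncard :=
    ht ▸ (hbip.isTotalDomSet_union hSAmin.1 hSBmin.1).totalDomNum_le.trans (Set.ncard_union_le _ _)
  have hlenA : ∀ l, IsLegalSeq G l → (∀ x ∈ l, x ∈ A) → l.length ≤ SA.ncard := fun _ =>
    hbip.length_le_ncard_of_grundyTotalDomNum_le hiso (by omega) hSAmin.1 hSBB hSBmin
  have hlenB : ∀ l, IsLegalSeq G l → (∀ x ∈ l, x ∈ B) → l.length ≤ SB.ncard := fun _ =>
    hbip.symm.length_le_ncard_of_grundyTotalDomNum_le hiso (by omega) hSBmin.1 hSAA hSAmin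
  -- any `k + 1` vertices of one side dominate the other, so `6 ≤ 2 (k + 1)`
  have hk : 2 ≤ k := by
    obtain ⟨S, hSA', hS⟩ := Set.exists_subset_card_eq (Nat.succ_le_of_lt hA)
    obtain ⟨T, hTB, hT⟩ := Set.exists_subset_card_eq (Nat.succ_le_of_lt hB)
    have := hSA S hSA' (dominates_of_ncard_lt hSA' fun b hb => by rw [hkB b hb, hS]; omega)
    have := hSB T hTB (dominates_of_ncard_lt hTB fun a ha => by rw [hkA a ha, hT]; omega)
    omega
  have h3A : 3 ≤ SA.ncard := by
    obtain ⟨b, hb⟩ := Set.nonempty_of_ncard_ne_zero (ne_zero_of_lt hB)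
    obtain ⟨l, hl, hlA, hlen⟩ := hftf.exists_isLegalSeq_length_three hreg (hbip.dominates hiso) hb
      (by rw [hkB b hb]; omega)
    exact hlen ▸ hlenA l hl hlA
  have h3B : 3 ≤ SB.ncard := by
    obtain ⟨a, ha⟩ := Set.nonempty_of_ncard_ne_zero (ne_zero_of_lt hA)
    obtain ⟨l, hl, hlB, hlen⟩ := hftf.exists_isLegalSeq_length_three hreg
      (hbip.symm.dominates hiso) ha (by rw [hkA a ha]; omega)
    exact hlen ▸ hlenB l hl hlB
  exact ⟨fun S hS hdom => (hSA S hS hdom).trans' h3A, fun l hl hlA => by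
    have := hlenA l hl hlA; omega⟩

/-- A neighbour `u` of `x` missing `y` would make `a, a', u, c` a legal sequence in `A`, for any
neighbour `c` of `y`. -/
theorem neighborSet_subset_of_not_adj [Fintype V] (hiso : NoIsolatedVerts G)
    (hftf : FalseTwinFree G) {d : ℕ} (hreg : ∀ v, (G.neighborSet v).ncard = d)
    (hlen : ∀ l, IsLegalSeq G l → (∀ x ∈ l, x ∈ A) → l.length ≤ 3) {a a' x y : V}
    (ha : a ∈ A) (ha' : a' ∈ A) (hne : a ≠ a') (hx : x ∈ B) (hy : y ∈ B)
    (hxa : ¬ G.Adj x a) (hxa' : ¬ G.Adj x a') (hya : ¬ G.Adj y a) (hya' : ¬ G.Adj y a') :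
    G.neighborSet x ⊆ G.neighborSet y := by
  intro u hxu
  by_contra hyu
  have hl := (hftf.isLegalSeq_pair hreg hne).concat_of_adj hxu (by simpa using ⟨hxa, hxa'⟩)
  obtain ⟨c, hc, hyc⟩ := hbip.dominates hiso y hy
  have hl' := hl.concat_of_adj hyc (by simpa using ⟨hya, hya', hyu⟩)
  have := hlen _ hl' (by simpa using ⟨ha, ha', hbip.symm.mem_of_adj hx hxu, hc⟩)
  simp at this

theorem eq_of_not_adj [Fintype V] (hiso : NoIsolatedVerts G)
    (hftf : FalseTwinFree G) {d : ℕ} (hreg : ∀ v, (G.neighborSet v).ncard = d)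
    (hlen : ∀ l, IsLegalSeq G l → (∀ x ∈ l, x ∈ A) → l.length ≤ 3) {a a' x y : V}
    (ha : a ∈ A) (ha' : a' ∈ A) (hne : a ≠ a') (hx : x ∈ B) (hy : y ∈ B)
    (hxa : ¬ G.Adj x a) (hxa' : ¬ G.Adj x a') (hya : ¬ G.Adj y a) (hya' : ¬ G.Adj y a') :
    x = y :=
  by_contra fun hxy => hftf x y hxy <| subset_antisymm
    (hbip.neighborSet_subset_of_not_adj hiso hftf hreg hlen ha ha' hne hx hy hxa hxa' hya hya')
    (hbip.neighborSet_subset_of_not_adj hiso hftf hreg hlen ha ha' hne hy hx hya hya' hxa hxa')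

theorem setOf_neighborSet_subset_union_eq {a₁ a₂ p : V} (hp : p ∈ B) (hp₁ : ¬ G.Adj p a₁)
    (hp₂ : ¬ G.Adj p a₂) (hunique : ∀ y ∈ B, ¬ G.Adj y a₁ → ¬ G.Adj y a₂ → y = p) :
    {a ∈ A \ {a₁, a₂} | G.neighborSet a ⊆ G.neighborSet a₁ ∪ G.neighborSet a₂} =
      (A \ G.neighborSet p) \ {a₁, a₂} := by
  ext a
  simp only [Set.mem_ofPred_eq, Set.mem_sdiff, SimpleGraph.mem_neighborSet]
  refine ⟨fun ⟨⟨ha, ha₁₂⟩, hsub⟩ => ⟨⟨ha, fun hpa => ?_⟩, ha₁₂⟩,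
    fun ⟨⟨ha, hpa⟩, ha₁₂⟩ => ⟨⟨ha, ha₁₂⟩, fun y hay => ?_⟩⟩
  · rcases hsub hpa.symm with h | h
    exacts [hp₁ h.symm, hp₂ h.symm]
  · by_contra hy
    simp only [Set.mem_union, SimpleGraph.mem_neighborSet, not_or] at hy
    obtain rfl := hunique y (hbip.mem_of_adj ha hay) (fun h => hy.1 h.symm) (fun h => hy.2 h.symm)
    exact hpa hay.symm

end IsBipartitionOf

end

theorem Nat.eq_sq_sub_add_one_of_sub_one_eq_mul {n k : ℕ} (hk : 0 < k) (hkn : k < n)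
    (h : n - 1 = k * (k - 1)) : n = k ^ 2 - k + 1 ∧ n - k = (k - 1) ^ 2 := by
  obtain ⟨j, rfl⟩ : ∃ j, k = j + 1 := ⟨k - 1, by omega⟩
  simp only [Nat.add_sub_cancel] at h ⊢
  have h₁ : (j + 1) ^ 2 = j ^ 2 + j + (j + 1) := by ring
  have h₂ : (j + 1) * j = j ^ 2 + j := by ring
  omega

/-- `n = k² − k + 1`, `|A'| = k − 2` and `|A''| = (k − 1)²`. -/
theorem claim_sizes
    {V : Type*} [Fintype V] (G : SimpleGraph V) (n k : ℕ) (A B : Set V)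
    (hbip : IsBipartitionOf G A B) (hftf : FalseTwinFree G)
    (hcard : Fintype.card V = 2 * n)
    (hreg : ∀ v : V, (G.neighborSet v).ncard = n - k)
    (ht : totalDomNum G = 6) (hg : grundyTotalDomNum G = 6)
    (a₁ a₂ : V) (ha₁ : a₁ ∈ A) (ha₂ : a₂ ∈ A) (hne : a₁ ≠ a₂)
    (B₁ B₂ B' A' : Set V)
    (hB₂ : B₂ = G.neighborSet a₁ \ G.neighborSet a₂)
    (hB₁ : B₁ = G.neighborSet a₂ \ G.neighborSet a₁)
    (hB' : B' = G.neighborSet a₁ ∩ G.neighborSet a₂)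
    (hA' : A' = {a ∈ A \ {a₁, a₂} | G.neighborSet a ⊆ B₁ ∪ B₂ ∪ B'})
    (A'' : Set V) (hA'' : A'' = A \ (A' ∪ {a₁, a₂})) :
    n = k ^ 2 - k + 1 ∧ A'.ncard = k - 2 ∧ A''.ncard = (k - 1) ^ 2 := by
  have hiso : NoIsolatedVerts G := .of_totalDomNum_ne_zero (by omega)
  have : Nonempty V := ⟨a₁⟩
  obtain ⟨hkn, hA, hkA⟩ := hbip.lt_and_ncard_eq_and_ncard_sdiff_neighborSet_eq hiso hcard hreg
  obtain ⟨-, hB, hkB⟩ := hbip.symm.lt_and_ncard_eq_and_ncard_sdiff_neighborSet_eq hiso hcard hreg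
  obtain ⟨hdomA, hlenA⟩ :=
    hbip.three_le_and_length_le_three hiso hftf hreg hkA hkB (by omega) (by omega) ht hg
  obtain ⟨hdomB, -⟩ :=
    hbip.symm.three_le_and_length_le_three hiso hftf hreg hkB hkA (by omega) (by omega) ht hg
  obtain ⟨p, hp, hp₁, hp₂⟩ := exists_not_adj_not_adj_of_forall_three_le hdomA ha₁ ha₂
  have hcount := ncard_sub_one_eq_ncard_mul hp hkA
    (fun y hy => exists_not_adj_not_adj_of_forall_three_le hdomB hy hp)
    fun a ha a' ha' hne y hy => hbip.eq_of_not_adj hiso hftf hreg hlenA ha ha' hne hy hp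
  set T := A \ G.neighborSet p
  have hTk : T.ncard = k := hkB p hp
  have hpair : {a₁, a₂} ⊆ T :=
    Set.insert_subset ⟨ha₁, fun h => hp₁ h⟩ (Set.singleton_subset_iff.2 ⟨ha₂, fun h => hp₂ h⟩)
  have hA'T : A' = T \ {a₁, a₂} := by
    rw [hA', hB₁, hB₂, hB', Set.union_assoc, Set.sdiff_union_inter, Set.sdiff_union_self,
      Set.union_comm]
    exact hbip.setOf_neighborSet_subset_union_eq hp hp₁ hp₂ fun y hy h₁ h₂ =>
      hbip.eq_of_not_adj hiso hftf hreg hlenA ha₁ ha₂ hne hy hp h₁ h₂ hp₁ hp₂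
  have hA''T : A'' = A \ T := by rw [hA'', hA'T, Set.sdiff_union_of_subset hpair]
  have hk : 2 ≤ k := hTk ▸ Set.ncard_pair hne ▸ Set.ncard_le_ncard hpair
  obtain ⟨hn, hnk⟩ := Nat.eq_sq_sub_add_one_of_sub_one_eq_mul (n := n) (k := k) (by omega) hkn
    (by rw [hTk] at hcount; omega)
  refine ⟨hn, ?_, ?_⟩
  · rw [hA'T, Set.ncard_sdiff hpair, hTk, Set.ncard_pair hne]
  · rw [hA''T, Set.ncard_sdiff Set.sdiff_subset, hTk, ← hnk, hA]
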